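/- Let g ∈ GL_n(k), X ∈ Mat_n(k), and let F^i denote the span of the first i columns of g. Then for i, j ∈ {1,…,n}, the rank of the top-left (n+i) × (n+j) submatrix of the block matrix [[X, g], [w₀ g⁻¹, 0]] equals i + j + rank(X : F^{n-i} → k^n/F^j). -/
import Mathlib


open Matrix

def w0 (k : Type*) [Field k] (n : ℕ) : Matrix (Fin n) (Fin n) k :=
  Matrix.of fun i j => if j = i.rev then 1 else 0

noncomputable def blockM {k : Type*} [Field k] {n : ℕ} (X g : Matrix (Fin n) (Fin n) k) :
    Matrix (Fin (n + n)) (Fin (n + n)) k :=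
  (Matrix.fromBlocks X g (w0 k n * g⁻¹) 0).submatrix
    finSumFinEquiv.symm finSumFinEquiv.symm

/-- `F^j` : the span of the first `j` columns of `g`. -/
def Fspan {k : Type*} [Field k] {n : ℕ} (g : Matrix (Fin n) (Fin n) k) (j : ℕ) :
    Submodule k (Fin n → k) :=
  Submodule.span k ((fun c : Fin n => g.transpose c) '' {c | (c : ℕ) < j})

section helpers

variable {k : Type*} [Field k] {n : ℕ}

/-- Coordinate subspace: functions vanishing on indices `≥ m`. -/
def Vsub (k : Type*) [Field k] (n m : ℕ) : Submodule k (Fin n → k) where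
  carrier := {x | ∀ s : Fin n, m ≤ (s : ℕ) → x s = 0}
  add_mem' := fun hx hy s hs => by simp [hx s hs, hy s hs]
  zero_mem' := fun s _ => rfl
  smul_mem' := fun c x hx s hs => by simp [hx s hs]

lemma mem_Vsub {m : ℕ} {x : Fin n → k} :
    x ∈ Vsub k n m ↔ ∀ s : Fin n, m ≤ (s : ℕ) → x s = 0 := Iff.rfl

noncomputable def VsubEquiv {m : ℕ} (hm : m ≤ n) : Vsub k n m ≃ₗ[k] (Fin m → k) where
  toFun x c := x.1 (Fin.castLE hm c)
  map_add' x y := rfl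
  map_smul' c x := rfl
  invFun y := ⟨fun s => if h : (s : ℕ) < m then y ⟨s, h⟩ else 0,
    fun s hs => by simp [Nat.not_lt.2 hs]⟩
  left_inv x := by
    ext s
    by_cases h : (s : ℕ) < m
    · simp [h]
    · simp [h, x.2 s (Nat.not_lt.1 h)]
  right_inv y := by
    ext c
    simp [c.isLt]

lemma finrank_Vsub {m : ℕ} (hm : m ≤ n) : Module.finrank k (Vsub k n m) = m := by
  rw [(VsubEquiv hm).finrank_eq]
  simp

lemma mulVec_eq_sum_cols (g : Matrix (Fin n) (Fin n) k) (x : Fin n → k) :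
    g.mulVec x = ∑ c, x c • g.transpose c := by
  ext r
  simp [Matrix.mulVec, dotProduct, mul_comm]

lemma Fspan_eq_map (g : Matrix (Fin n) (Fin n) k) (m : ℕ) :
    Fspan g m = (Vsub k n m).map g.mulVecLin := by
  apply le_antisymm
  · rw [Fspan, Submodule.span_le]
    rintro _ ⟨c, hc, rfl⟩
    simp only [Set.mem_setOf_eq] at hc
    refine ⟨Pi.single c 1, fun s hs => ?_, ?_⟩
    · refine Pi.single_eq_of_ne (fun h : s = c => ?_) 1
      rw [h] at hs
      omega
    · ext r
      simp [Matrix.mulVecLin_apply, Matrix.mulVec_single]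
  · rintro _ ⟨x, hx, rfl⟩
    rw [Matrix.mulVecLin_apply, mulVec_eq_sum_cols]
    rw [← Finset.sum_filter_add_sum_filter_not Finset.univ (fun c : Fin n => (c : ℕ) < m)]
    have h2 : ∑ c ∈ Finset.univ.filter (fun c : Fin n => ¬ (c : ℕ) < m),
        x c • g.transpose c = 0 := by
      apply Finset.sum_eq_zero
      intro c hc
      rw [Finset.mem_filter] at hc
      rw [hx c (Nat.not_lt.1 hc.2), zero_smul]
    rw [h2, add_zero]
    apply Submodule.sum_mem
    intro c hc
    rw [Finset.mem_filter] at hc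
    exact Submodule.smul_mem _ _ (Submodule.subset_span ⟨c, hc.2, rfl⟩)

lemma mem_Fspan_iff {g : Matrix (Fin n) (Fin n) k} (hg : IsUnit g) {m : ℕ} {u : Fin n → k} :
    u ∈ Fspan g m ↔ ∀ s : Fin n, m ≤ (s : ℕ) → g⁻¹.mulVec u s = 0 := by
  have hdet : IsUnit g.det := (Matrix.isUnit_iff_isUnit_det g).1 hg
  rw [Fspan_eq_map, ← mem_Vsub]
  constructor
  · rintro ⟨x, hx, rfl⟩
    rwa [Matrix.mulVecLin_apply, Matrix.mulVec_mulVec, Matrix.nonsing_inv_mul _ hdet,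
      Matrix.one_mulVec]
  · intro h
    refine ⟨g⁻¹.mulVec u, h, ?_⟩
    rw [Matrix.mulVecLin_apply, Matrix.mulVec_mulVec, Matrix.mul_nonsing_inv _ hdet,
      Matrix.one_mulVec]

lemma mulVecLin_injective {g : Matrix (Fin n) (Fin n) k} (hg : IsUnit g) :
    Function.Injective g.mulVecLin := by
  have hdet : IsUnit g.det := (Matrix.isUnit_iff_isUnit_det g).1 hg
  intro x y h
  have := congrArg (g⁻¹.mulVec) h
  simpa [Matrix.mulVecLin_apply, Matrix.mulVec_mulVec, Matrix.nonsing_inv_mul _ hdet,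
    Matrix.one_mulVec] using this

lemma finrank_Fspan {g : Matrix (Fin n) (Fin n) k} (hg : IsUnit g) {m : ℕ} (hm : m ≤ n) :
    Module.finrank k (Fspan g m) = m := by
  rw [Fspan_eq_map, ← (Submodule.equivMapOfInjective _ (mulVecLin_injective hg) _).finrank_eq,
    finrank_Vsub hm]

end helpers

section main

variable {k : Type*} [Field k] {n : ℕ}

lemma rank_submatrix_equiv {α β α' β' : Type*} [Fintype β] [Fintype β'] [Fintype α] [Fintype α']
    [DecidableEq β] [DecidableEq β'] (A : Matrix α β k) (e₁ : α' ≃ α) (e₂ : β' ≃ β) :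
    (A.submatrix e₁ e₂).rank = A.rank := by
  rw [Matrix.rank, Matrix.rank, Matrix.mulVecLin_submatrix, LinearMap.range_comp,
    LinearMap.range_comp,
    show LinearMap.funLeft k k e₂.symm = (LinearEquiv.funCongrLeft k k e₂.symm : _) from rfl,
    LinearEquiv.range, Submodule.map_top,
    show LinearMap.funLeft k k e₁ = (LinearEquiv.funCongrLeft k k e₁ : _) from rfl]
  exact LinearEquiv.finrank_map_eq _ _

lemma Fspan_eq_range (g : Matrix (Fin n) (Fin n) k) {j : ℕ} (hj : j ≤ n) :
    Fspan g j = LinearMap.range (g.submatrix id (Fin.castLE hj)).mulVecLin := by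
  rw [Matrix.range_mulVecLin, Fspan]
  congr 1
  ext u
  simp only [Set.mem_image, Set.mem_range, Set.mem_setOf_eq, Matrix.transpose_submatrix]
  constructor
  · rintro ⟨c, hc, rfl⟩
    refine ⟨⟨(c : ℕ), hc⟩, ?_⟩
    rfl
  · rintro ⟨c', rfl⟩
    exact ⟨Fin.castLE hj c', c'.isLt, rfl⟩

end main


set_option maxHeartbeats 1000000 in
set_option synthInstance.maxHeartbeats 400000 in
/-- The rank of the top-left `(n+i) × (n+j)` submatrix of `[[X, g], [w₀ g⁻¹, 0]]`
equals `i + j + rank(X : F^{n-i} → kⁿ/F^j)`. -/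
theorem stmt_10 {k : Type*} [Field k] {n : ℕ}
    (g X : Matrix (Fin n) (Fin n) k) (hg : IsUnit g)
    (i j : ℕ) (hi : 1 ≤ i) (hi' : i ≤ n) (hj : 1 ≤ j) (hj' : j ≤ n) :
    ((blockM X g).submatrix (Fin.castLE (show n + i ≤ n + n by omega))
        (Fin.castLE (show n + j ≤ n + n by omega))).rank =
      i + j + Module.finrank k
        (LinearMap.range ((Fspan g j).mkQ ∘ₗ X.mulVecLin ∘ₗ (Fspan g (n - i)).subtype)) := by
  classical
  have hdet : IsUnit g.det := (Matrix.isUnit_iff_isUnit_det g).1 hg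
  set B : Matrix (Fin n) (Fin j) k := g.submatrix id (Fin.castLE hj') with hB
  set C : Matrix (Fin i) (Fin n) k := (w0 k n * g⁻¹).submatrix (Fin.castLE hi') id with hC
  set S' : Matrix (Fin n ⊕ Fin i) (Fin n ⊕ Fin j) k := Matrix.fromBlocks X B C 0 with hS'
  set φ : (Fspan g (n - i)) →ₗ[k] _ :=
    (Fspan g j).mkQ ∘ₗ X.mulVecLin ∘ₗ (Fspan g (n - i)).subtype with hφ
  -- Step 1: identify the submatrix with a block matrix
  have hsub : (blockM X g).submatrix (Fin.castLE (show n + i ≤ n + n by omega))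
        (Fin.castLE (show n + j ≤ n + n by omega)) =
      S'.submatrix finSumFinEquiv.symm finSumFinEquiv.symm := by
    ext r c
    simp only [blockM, Matrix.submatrix_apply]
    have hr : finSumFinEquiv.symm (Fin.castLE (show n + i ≤ n + n by omega) r) =
        Sum.map id (Fin.castLE hi') (finSumFinEquiv.symm r) := by
      induction r using Fin.addCases with
      | left l =>
        rw [show Fin.castLE (show n + i ≤ n + n by omega) (Fin.castAdd i l) =
          Fin.castAdd n l from rfl, finSumFinEquiv_symm_apply_castAdd,
          finSumFinEquiv_symm_apply_castAdd]
        rfl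
      | right r' =>
        rw [show Fin.castLE (show n + i ≤ n + n by omega) (Fin.natAdd n r') =
          Fin.natAdd n (Fin.castLE hi' r') from rfl, finSumFinEquiv_symm_apply_natAdd,
          finSumFinEquiv_symm_apply_natAdd]
        rfl
    have hc : finSumFinEquiv.symm (Fin.castLE (show n + j ≤ n + n by omega) c) =
        Sum.map id (Fin.castLE hj') (finSumFinEquiv.symm c) := by
      induction c using Fin.addCases with
      | left l =>
        rw [show Fin.castLE (show n + j ≤ n + n by omega) (Fin.castAdd j l) =
          Fin.castAdd n l from rfl, finSumFinEquiv_symm_apply_castAdd,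
          finSumFinEquiv_symm_apply_castAdd]
        rfl
      | right c' =>
        rw [show Fin.castLE (show n + j ≤ n + n by omega) (Fin.natAdd n c') =
          Fin.natAdd n (Fin.castLE hj' c') from rfl, finSumFinEquiv_symm_apply_natAdd,
          finSumFinEquiv_symm_apply_natAdd]
        rfl
    rw [hr, hc]
    rcases finSumFinEquiv.symm r with l | r' <;>
      rcases finSumFinEquiv.symm c with m | c' <;>
        simp [hS', Matrix.fromBlocks, hB, hC]
  rw [hsub, rank_submatrix_equiv]
  -- characterization of the `C` block kernel
  have hCapp : ∀ (u : Fin n → k) (r : Fin i),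
      C.mulVec u r = g⁻¹.mulVec u (Fin.castLE hi' r).rev := by
    intro u r
    simp only [hC, Matrix.mulVec, dotProduct, Matrix.submatrix_apply, id_eq,
      Matrix.mul_apply, w0, Matrix.of_apply, ite_mul, one_mul, zero_mul]
    simp [Finset.sum_ite_eq']
  have hCker : ∀ u : Fin n → k, C.mulVec u = 0 ↔ u ∈ Fspan g (n - i) := by
    intro u
    rw [mem_Fspan_iff hg]
    constructor
    · intro h s hs
      have hr : (n : ℕ) - 1 - (s : ℕ) < i := by omega
      have := congrFun h ⟨n - 1 - (s : ℕ), hr⟩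
      rw [hCapp] at this
      simp only [Pi.zero_apply] at this
      rw [← this]
      congr 1
      apply Fin.ext
      rw [Fin.val_rev]
      simp
      omega
    · intro h
      ext r
      rw [hCapp]
      simp only [Pi.zero_apply]
      apply h
      rw [Fin.val_rev]
      have := (Fin.castLE hi' r).isLt
      have := r.isLt
      simp only [Fin.coe_castLE]
      omega
  -- the `B` block
  have hBrange : Fspan g j = LinearMap.range B.mulVecLin := Fspan_eq_range g hj'
  have hBv : ∀ (v : Fin j → k) (c' : Fin j),
      g⁻¹.mulVec (B.mulVec v) (Fin.castLE hj' c') = v c' := by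
    intro v c'
    rw [Matrix.mulVec_mulVec]
    have h1 : g⁻¹ * B = (1 : Matrix (Fin n) (Fin n) k).submatrix id (Fin.castLE hj') := by
      rw [hB]
      ext r c
      simp only [Matrix.mul_apply, Matrix.submatrix_apply, id_eq]
      rw [show (∑ s, g⁻¹ r s * g s (Fin.castLE hj' c)) = (g⁻¹ * g) r (Fin.castLE hj' c) from rfl,
        Matrix.nonsing_inv_mul _ hdet]
      rfl
    rw [h1]
    simp only [Matrix.mulVec, dotProduct, Matrix.submatrix_apply, id_eq, Matrix.one_apply]
    rw [Finset.sum_eq_single c']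
    · simp
    · intro b _ hb
      rw [if_neg, zero_mul]
      simp only [Fin.castLE_inj]
      exact fun h => hb h.symm
    · simp
  have hBinj : Function.Injective B.mulVecLin := by
    intro v w h
    funext c'
    rw [← hBv v c', ← hBv w c']
    simp only [Matrix.mulVecLin_apply] at h
    rw [h]
  -- kernel description
  have hker : ∀ w : Fin n ⊕ Fin j → k, S'.mulVecLin w = 0 ↔
      (X.mulVec (w ∘ Sum.inl) + B.mulVec (w ∘ Sum.inr) = 0 ∧ C.mulVec (w ∘ Sum.inl) = 0) := by
    intro w
    rw [Matrix.mulVecLin_apply, hS', Matrix.fromBlocks_mulVec]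
    constructor
    · intro h
      constructor
      · funext r; exact congrFun h (Sum.inl r)
      · funext r
        have := congrFun h (Sum.inr r)
        simpa using this
    · rintro ⟨h1, h2⟩
      funext rc
      rcases rc with r | r
      · exact congrFun h1 r
      · simpa using congrFun h2 r
  -- build the linear map from ker S' to ker φ
  have hmem1 : ∀ w : LinearMap.ker S'.mulVecLin, (w : Fin n ⊕ Fin j → k) ∘ Sum.inl ∈ Fspan g (n - i) := by
    intro w
    exact (hCker _).1 ((hker w).1 w.2).2
  set f1 : LinearMap.ker S'.mulVecLin →ₗ[k] (Fspan g (n - i)) :=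
    LinearMap.codRestrict (Fspan g (n - i))
      (LinearMap.funLeft k k Sum.inl ∘ₗ (LinearMap.ker S'.mulVecLin).subtype) hmem1 with hf1
  have hmem2 : ∀ w, f1 w ∈ LinearMap.ker φ := by
    intro w
    have h := (hker w).1 w.2
    have hXu : X.mulVec ((w : Fin n ⊕ Fin j → k) ∘ Sum.inl) ∈ Fspan g j := by
      rw [hBrange]
      refine ⟨-((w : Fin n ⊕ Fin j → k) ∘ Sum.inr), ?_⟩
      simp only [map_neg, Matrix.mulVecLin_apply]
      rw [neg_eq_iff_add_eq_zero, add_comm]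
      exact h.1
    simp only [LinearMap.mem_ker, hφ, LinearMap.comp_apply, Submodule.mkQ_apply,
      Submodule.Quotient.mk_eq_zero]
    exact hXu
  set ψ : LinearMap.ker S'.mulVecLin →ₗ[k] LinearMap.ker φ :=
    LinearMap.codRestrict (LinearMap.ker φ) f1 hmem2 with hψ
  have hbij : Function.Bijective ψ := by
    constructor
    · intro w w' h
      have hu : (w : Fin n ⊕ Fin j → k) ∘ Sum.inl = (w' : Fin n ⊕ Fin j → k) ∘ Sum.inl := by
        have := congrArg (fun z => ((z : Fspan g (n - i)) : Fin n → k)) (congrArg Subtype.val h)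
        exact this
      have h1 := (hker w).1 w.2
      have h2 := (hker w').1 w'.2
      have hv : B.mulVec ((w : Fin n ⊕ Fin j → k) ∘ Sum.inr) =
          B.mulVec ((w' : Fin n ⊕ Fin j → k) ∘ Sum.inr) := by
        have e1 : B.mulVec ((w : Fin n ⊕ Fin j → k) ∘ Sum.inr) =
            -X.mulVec ((w : Fin n ⊕ Fin j → k) ∘ Sum.inl) := by
          rw [eq_neg_iff_add_eq_zero, add_comm]; exact h1.1
        have e2 : B.mulVec ((w' : Fin n ⊕ Fin j → k) ∘ Sum.inr) =
            -X.mulVec ((w' : Fin n ⊕ Fin j → k) ∘ Sum.inl) := by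
          rw [eq_neg_iff_add_eq_zero, add_comm]; exact h2.1
        rw [e1, e2, hu]
      have hvv : (w : Fin n ⊕ Fin j → k) ∘ Sum.inr = (w' : Fin n ⊕ Fin j → k) ∘ Sum.inr :=
        hBinj hv
      apply Subtype.ext
      funext rc
      rcases rc with r | r
      · exact congrFun hu r
      · exact congrFun hvv r
    · rintro ⟨⟨u, hu⟩, hy⟩
      have hXu : X.mulVec u ∈ Fspan g j := by
        simpa only [LinearMap.mem_ker, hφ, LinearMap.comp_apply, Submodule.mkQ_apply,
          Submodule.Quotient.mk_eq_zero, Submodule.subtype_apply, Matrix.mulVecLin_apply] using hy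
      rw [hBrange] at hXu
      obtain ⟨v, hv⟩ := hXu
      refine ⟨⟨Sum.elim u (-v), ?_⟩, ?_⟩
      · rw [LinearMap.mem_ker, hker]
        constructor
        · have : (Sum.elim u (-v) : Fin n ⊕ Fin j → k) ∘ Sum.inr = -v := rfl
          simp only [this, Sum.elim_comp_inl]
          rw [Matrix.mulVec_neg]
          rw [Matrix.mulVecLin_apply] at hv
          rw [hv]
          simp
        · rw [Sum.elim_comp_inl, hCker]
          exact hu
      · apply Subtype.ext
        apply Subtype.ext
        rfl
  have hkereq : Module.finrank k (LinearMap.ker S'.mulVecLin) =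
      Module.finrank k (LinearMap.ker φ) :=
    (LinearEquiv.ofBijective ψ hbij).finrank_eq
  have h1 : S'.rank + Module.finrank k (LinearMap.ker S'.mulVecLin) = n + j := by
    rw [Matrix.rank]
    rw [LinearMap.finrank_range_add_finrank_ker S'.mulVecLin]
    simp [Module.finrank_pi]
  have h2 : Module.finrank k (LinearMap.range φ) + Module.finrank k (LinearMap.ker φ) = n - i := by
    rw [LinearMap.finrank_range_add_finrank_ker φ]
    exact finrank_Fspan hg (Nat.sub_le n i)
  omega
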